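/- arXiv:1505.05077 — 4 statements merged into one kernel-verified Lean document; each statement's English description precedes it below -/
import Mathlib

section
/- Let F : ℝ^N → ℝ be a C² function with everywhere positive definite Hessian whose gradient vanishes at some point. Then F(x) → +∞ as ‖x‖ → ∞, and F is a proper map (preimages of compact sets are compact). -/
/-!
The second derivative of `F` along every line is positive, so `F` is strictly convex and its
critical point `u₀` is its unique global minimum. On the compact unit sphere around `u₀` the
function therefore exceeds `F u₀` by some `m > 0`, and convexity propagates this to the linear
lower bound `F x ≥ F u₀ + m ‖x - u₀‖` outside the unit ball. Hence `F` tends to `+∞` at infinity,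
and a continuous real function with this property is proper.
-/

open Set Filter AffineMap

section

variable {E : Type*} [NormedAddCommGroup E] [NormedSpace ℝ E] {F : E → ℝ}

theorem hasDerivAt_comp_lineMap (hF : Differentiable ℝ F) (x y : E) (t : ℝ) :
    HasDerivAt (fun s => F (lineMap x y s)) (fderiv ℝ F (lineMap x y t) (y - x)) t :=
  (hF _).hasFDerivAt.comp_hasDerivAt t hasDerivAt_lineMap

theorem strictMono_fderiv_lineMap (hF : ContDiff ℝ 2 F)
    (hpos : ∀ u v : E, v ≠ 0 → 0 < fderiv ℝ (fun w => fderiv ℝ F w v) u v)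
    {x y : E} (hxy : x ≠ y) : StrictMono fun t : ℝ => fderiv ℝ F (lineMap x y t) (y - x) := by
  have hdiff : Differentiable ℝ fun w => fderiv ℝ F w (y - x) :=
    ((hF.fderiv_right (m := 1) le_rfl).differentiable one_ne_zero).clm_apply
      (differentiable_const _)
  refine strictMono_of_deriv_pos fun t => ?_
  have hderiv : HasDerivAt (fun s : ℝ => fderiv ℝ F (lineMap x y s) (y - x))
      (fderiv ℝ (fun w => fderiv ℝ F w (y - x)) (lineMap x y t) (y - x)) t :=
    (hdiff _).hasFDerivAt.comp_hasDerivAt t hasDerivAt_lineMap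
  rw [hderiv.deriv]
  exact hpos _ _ (sub_ne_zero.2 hxy.symm)

theorem strictConvexOn_univ_of_hessian_pos (hF : ContDiff ℝ 2 F)
    (hpos : ∀ u v : E, v ≠ 0 → 0 < fderiv ℝ (fun w => fderiv ℝ F w v) u v) :
    StrictConvexOn ℝ univ F := by
  refine ⟨convex_univ, fun x _ y _ hxy a b ha hb hab => ?_⟩
  have hdF : Differentiable ℝ F := hF.differentiable two_ne_zero
  have hderiv :
      deriv (fun s => F (lineMap x y s)) = fun t => fderiv ℝ F (lineMap x y t) (y - x) :=
    funext fun t => (hasDerivAt_comp_lineMap hdF x y t).deriv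
  have hline : StrictConvexOn ℝ univ fun s => F (lineMap x y s) :=
    StrictMono.strictConvexOn_univ_of_deriv (hdF.continuous.comp lineMap_continuous)
      (hderiv ▸ strictMono_fderiv_lineMap hF hpos hxy)
  have := hline.2 (mem_univ 0) (mem_univ 1) zero_ne_one ha hb hab
  obtain rfl := eq_sub_of_add_eq hab
  simpa [lineMap_apply_module] using this

theorem ConvexOn.isMinOn_univ_of_fderiv_eq_zero (hconv : ConvexOn ℝ univ F)
    (hF : Differentiable ℝ F) {u : E} (hu : fderiv ℝ F u = 0) : IsMinOn F univ u := by
  intro x _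
  have hline : ConvexOn ℝ univ fun s : ℝ => F (lineMap u x s) :=
    hconv.comp_affineMap (lineMap u x)
  have hderiv : HasDerivAt (fun s : ℝ => F (lineMap u x s)) 0 0 := by
    simpa [hu] using hasDerivAt_comp_lineMap hF u x 0
  have := hline.isMinOn_of_rightDeriv_eq_zero (by simp)
    (hderiv.hasDerivWithinAt.derivWithin (uniqueDiffWithinAt_Ioi 0)) (mem_univ 1)
  simpa using this

theorem StrictConvexOn.lt_of_isMinOn (hconv : StrictConvexOn ℝ univ F) {u x : E}
    (hu : IsMinOn F univ u) (hx : x ≠ u) : F u < F x :=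
  (hu (mem_univ x)).lt_of_ne fun h =>
    hx (hconv.eq_of_isMinOn (fun y _ => h ▸ hu (mem_univ y)) hu (mem_univ x) (mem_univ u))

theorem ConvexOn.mul_sub_le_sub_of_one_le (hconv : ConvexOn ℝ univ F) (u x : E) {r : ℝ}
    (hr : 1 ≤ r) : r * (F (lineMap u x r⁻¹) - F u) ≤ F x - F u := by
  have hr0 : 0 < r := one_pos.trans_le hr
  have := hconv.2 (mem_univ u) (mem_univ x) (sub_nonneg.2 (inv_le_one_of_one_le₀ hr))
    (inv_nonneg.2 hr0.le) (sub_add_cancel 1 r⁻¹)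
  rw [← lineMap_apply_module, smul_eq_mul, smul_eq_mul] at this
  have h := mul_le_mul_of_nonneg_left this hr0.le
  field_simp at h ⊢
  nlinarith

theorem ConvexOn.tendsto_cocompact_atTop [ProperSpace E] (hconv : ConvexOn ℝ univ F)
    (hcont : Continuous F) {u : E} (hu : ∀ x ≠ u, F u < F x) :
    Tendsto F (cocompact E) atTop := by
  obtain ⟨m, hm, hsphere⟩ : ∃ m > 0, ∀ y ∈ Metric.sphere u 1, F u + m ≤ F y := by
    rcases (Metric.sphere u 1).eq_empty_or_nonempty with hempty | hne
    · exact ⟨1, one_pos, by simp [hempty]⟩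
    obtain ⟨y₀, hy₀, hmin⟩ := (isCompact_sphere u 1).exists_isMinOn hne hcont.continuousOn
    refine ⟨F y₀ - F u, sub_pos.2 (hu y₀ ?_), fun y hy => by linarith [isMinOn_iff.1 hmin y hy]⟩
    rintro rfl
    simp at hy₀
  have hgrowth : ∀ x, 1 ≤ dist x u → F u + m * dist x u ≤ F x := by
    intro x hx
    have hy : lineMap u x (dist x u)⁻¹ ∈ Metric.sphere u 1 := by
      rw [Metric.mem_sphere, dist_lineMap_left, Real.norm_eq_abs, dist_comm u x,
        abs_of_pos (inv_pos.2 (one_pos.trans_le hx)), inv_mul_cancel₀ (one_pos.trans_le hx).ne']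
    nlinarith [hsphere _ hy, hconv.mul_sub_le_sub_of_one_le u x hx]
  have hdist := tendsto_dist_right_cocompact_atTop u
  refine tendsto_atTop_mono' _ ?_
    (tendsto_atTop_add_const_left _ (F u) (hdist.const_mul_atTop hm))
  filter_upwards [hdist.eventually_ge_atTop 1] with x hx using hgrowth x hx

end

/-- A `C²` function on `ℝ^N` with everywhere positive definite
Hessian whose gradient vanishes somewhere tends to `+∞` at infinity and is a
proper map. -/
theorem stmt1 (N : ℕ) (F : (Fin N → ℝ) → ℝ)
    (hF : ContDiff ℝ 2 F)
    (hHpd : ∀ u : Fin N → ℝ, ∀ x : Fin N → ℝ, x ≠ 0 →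
      0 < fderiv ℝ (fun v => fderiv ℝ F v x) u x)
    (hzero : ∃ u₀, fderiv ℝ F u₀ = 0) :
    Filter.Tendsto F (Filter.cocompact (Fin N → ℝ)) Filter.atTop ∧
    ∀ K : Set ℝ, IsCompact K → IsCompact (F ⁻¹' K) := by
  obtain ⟨u₀, hu₀⟩ := hzero
  have hdF : Differentiable ℝ F := hF.differentiable two_ne_zero
  have hconv := strictConvexOn_univ_of_hessian_pos hF hHpd
  have hmin := hconv.convexOn.isMinOn_univ_of_fderiv_eq_zero hdF hu₀
  have htend := hconv.convexOn.tendsto_cocompact_atTop hdF.continuous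
    fun x hx => hconv.lt_of_isMinOn hmin hx
  have hproper : IsProperMap F :=
    isProperMap_iff_tendsto_cocompact.2 ⟨hdF.continuous, htend.mono_right atTop_le_cocompact⟩
  exact ⟨htend, fun K hK => hproper.isCompact_preimage hK⟩
end

section
/- Consider the ODE system du_i/dt = s_α r_i^α - K_i(u) on ℝ^N, where r_i = e^{u_i}, s_α = 2πχ(M)/Σⱼ r_j^α, and each K_i is a continuous function of u satisfying (2-d)π ≤ K_i ≤ 2π for a fixed integer d. Then the right-hand side is uniformly bounded: |s_α r_i^α - K_i| ≤ 2π|χ(M)| + max{|2-d|, 2}π for all u and i; consequently any maximal solution exists for all time t ∈ (-∞, +∞). -/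
open scoped BigOperators
open Topology

set_option maxHeartbeats 1000000
set_option linter.unusedSectionVars false
set_option linter.unusedTactic false
set_option linter.unreachableTactic false
set_option linter.unusedVariables false
set_option linter.deprecated false


noncomputable def sig (ε t : ℝ) : ℝ := t - max (min t ε) (-ε)

lemma sig_lip (ε : ℝ) (hε : 0 < ε) (a b : ℝ) : |sig ε a - sig ε b| ≤ |a - b| := by
  rcases abs_cases (a - b) with ⟨h1, h2⟩ | ⟨h1, h2⟩ <;>
  · simp only [sig, min_def, max_def, abs_le, h1]
    split_ifs <;> constructor <;> linarith

lemma sig_close (ε : ℝ) (hε : 0 < ε) (t : ℝ) : |t - sig ε t| ≤ ε := by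
  rcases abs_cases t with ⟨h1, h2⟩ | ⟨h1, h2⟩ <;>
  · simp only [sig, min_def, max_def, abs_le]
    split_ifs <;> constructor <;> linarith

lemma sig_abs_le (ε : ℝ) (hε : 0 < ε) (t : ℝ) : |sig ε t| ≤ max (|t| - ε) 0 := by
  rcases abs_cases (sig ε t) with ⟨h1, h2⟩ | ⟨h1, h2⟩ <;>
    rcases abs_cases t with ⟨h3, h4⟩ | ⟨h3, h4⟩ <;>
    rw [h1, h3] <;>
    simp only [sig, min_def, max_def, le_max_iff] at * <;>
    split_ifs at * <;>
    first
      | linarith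
      | (left; linarith)
      | (right; linarith)

lemma sig_zero (ε : ℝ) (hε : 0 < ε) : sig ε 0 = 0 := by
  simp [sig, min_eq_left hε.le, max_eq_left (by linarith : -ε ≤ (0:ℝ))]



lemma sig_cont (ε : ℝ) : Continuous (sig ε) := by
  unfold sig; fun_prop

lemma abs_le_of_mem_uIcc {s x : ℝ} (h : s ∈ Set.uIcc 0 x) : |s| ≤ |x| := by
  rw [Set.uIcc_eq_union] at h
  rcases h with h | h <;> rw [Set.mem_Icc] at h <;> rw [abs_le] <;>
    constructor <;> cases abs_cases x <;> linarith [h.1, h.2]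

section Tonelli

variable {E : Type*} [NormedAddCommGroup E] [NormedSpace ℝ E] [CompleteSpace E]

noncomputable def tonelli (f : E → E) (u₀ : E) (ε : ℝ) : ℕ → ℝ → E
  | 0 => fun _ => u₀
  | (k+1) => fun t => u₀ + ∫ s in (0:ℝ)..(sig ε t), f (tonelli f u₀ ε k s)

variable {f : E → E} {M : ℝ} {u₀ : E} {ε : ℝ}

lemma M_nonneg (hM : ∀ x : E, ‖f x‖ ≤ M) : 0 ≤ M := le_trans (norm_nonneg _) (hM 0)

lemma tonelli_cont (hf : Continuous f) (k : ℕ) : Continuous (tonelli f u₀ ε k) := by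
  induction k with
  | zero => exact continuous_const
  | succ k ih =>
      have hc : Continuous (fun s => f (tonelli f u₀ ε k s)) := hf.comp ih
      exact continuous_const.add
        ((intervalIntegral.continuous_primitive
          (fun a b => hc.intervalIntegrable a b) 0).comp (sig_cont ε))

lemma tonelli_lip (hf : Continuous f) (hM : ∀ x, ‖f x‖ ≤ M) (hε : 0 < ε) (k : ℕ) (a b : ℝ) :
    ‖tonelli f u₀ ε (k+1) a - tonelli f u₀ ε (k+1) b‖ ≤ M * |a - b| := by
  have hc : Continuous (fun s => f (tonelli f u₀ ε k s)) := hf.comp (tonelli_cont hf k)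
  have key : tonelli f u₀ ε (k+1) a - tonelli f u₀ ε (k+1) b
      = ∫ s in (sig ε b)..(sig ε a), f (tonelli f u₀ ε k s) := by
    simp only [tonelli, add_sub_add_left_eq_sub]
    exact intervalIntegral.integral_interval_sub_left
      (hc.intervalIntegrable _ _) (hc.intervalIntegrable _ _)
  rw [key]
  calc ‖∫ s in (sig ε b)..(sig ε a), f (tonelli f u₀ ε k s)‖
      ≤ M * |sig ε a - sig ε b| :=
        intervalIntegral.norm_integral_le_of_norm_le_const (fun x _ => hM _)
    _ ≤ M * |a - b| := mul_le_mul_of_nonneg_left (sig_lip ε hε a b) (M_nonneg hM)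

lemma tonelli_coh (hf : Continuous f) (hε : 0 < ε) (k : ℕ) :
    ∀ t : ℝ, |t| ≤ k * ε → tonelli f u₀ ε (k+1) t = tonelli f u₀ ε k t := by
  induction k with
  | zero =>
      intro t ht
      have ht0 : t = 0 := abs_nonpos_iff.mp (by simpa using ht)
      subst ht0
      simp [tonelli, sig_zero ε hε]
  | succ k ih =>
      intro t ht
      have key : ∀ s ∈ Set.uIcc (0:ℝ) (sig ε t),
          f (tonelli f u₀ ε (k+1) s) = f (tonelli f u₀ ε k s) := by
        intro s hs
        have h1 : |s| ≤ |sig ε t| := abs_le_of_mem_uIcc hs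
        have h2 : |sig ε t| ≤ max (|t| - ε) 0 := sig_abs_le ε hε t
        have h3 : |s| ≤ k * ε := by
          push_cast at ht
          rcases max_cases (|t| - ε) 0 with ⟨he, _⟩ | ⟨he, _⟩ <;> rw [he] at h2 <;>
            nlinarith [mul_nonneg (Nat.cast_nonneg (α := ℝ) k) hε.le]
        rw [ih s h3]
      show u₀ + _ = u₀ + _
      congr 1
      exact intervalIntegral.integral_congr key

lemma tonelli_coh2 (hf : Continuous f) (hε : 0 < ε) {k j : ℕ} (hkj : k ≤ j) :
    ∀ t : ℝ, |t| ≤ k * ε → tonelli f u₀ ε (j+1) t = tonelli f u₀ ε (k+1) t := by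
  induction j, hkj using Nat.le_induction with
  | base => intro t _; rfl
  | succ j hkj ih =>
      intro t ht
      have h1 : |t| ≤ ((j+1 : ℕ) : ℝ) * ε := by
        push_cast
        have : (k:ℝ) ≤ j + 1 := by exact_mod_cast Nat.le_succ_of_le hkj
        nlinarith [abs_nonneg t]
      rw [tonelli_coh hf hε (j+1) t h1, ih t ht]


noncomputable def uapp (f : E → E) (u₀ : E) (ε : ℝ) (t : ℝ) : E :=
  tonelli f u₀ ε (⌈|t| / ε⌉₊ + 1) t

lemma le_ceil_mul (hε : 0 < ε) (t : ℝ) : |t| ≤ (⌈|t| / ε⌉₊ : ℝ) * ε := by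
  rw [← div_le_iff₀ hε]
  exact Nat.le_ceil _

lemma uapp_eq (hf : Continuous f) (hε : 0 < ε) {k : ℕ} {t : ℝ} (ht : |t| ≤ k * ε) :
    uapp f u₀ ε t = tonelli f u₀ ε (k+1) t := by
  set m := ⌈|t| / ε⌉₊ with hm
  show tonelli f u₀ ε (m + 1) t = tonelli f u₀ ε (k + 1) t
  rw [← tonelli_coh2 hf hε (le_max_right k m) t (le_ceil_mul hε t)]
  exact tonelli_coh2 hf hε (le_max_left k m) t ht

lemma uapp_zero (hf : Continuous f) (hε : 0 < ε) : uapp f u₀ ε 0 = u₀ := by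
  have h : uapp f u₀ ε 0 = tonelli f u₀ ε 1 0 :=
    uapp_eq hf hε (by simp)
  rw [h, tonelli_coh hf hε 0 0 (by simp)]
  rfl

lemma uapp_lip (hf : Continuous f) (hM : ∀ x, ‖f x‖ ≤ M) (hε : 0 < ε) (a b : ℝ) :
    ‖uapp f u₀ ε a - uapp f u₀ ε b‖ ≤ M * |a - b| := by
  set k := max ⌈|a| / ε⌉₊ ⌈|b| / ε⌉₊ with hk
  have ha : uapp f u₀ ε a = tonelli f u₀ ε (k+1) a :=
    uapp_eq hf hε (le_trans (le_ceil_mul hε a)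
      (mul_le_mul_of_nonneg_right (by exact_mod_cast le_max_left _ _) hε.le))
  have hb : uapp f u₀ ε b = tonelli f u₀ ε (k+1) b :=
    uapp_eq hf hε (le_trans (le_ceil_mul hε b)
      (mul_le_mul_of_nonneg_right (by exact_mod_cast le_max_right _ _) hε.le))
  rw [ha, hb]
  exact tonelli_lip hf hM hε k a b

lemma uapp_cont (hf : Continuous f) (hM : ∀ x, ‖f x‖ ≤ M) (hε : 0 < ε) :
    Continuous (uapp f u₀ ε) := by
  rw [Metric.continuous_iff]
  intro b δ hδ
  have hMn := M_nonneg hM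
  refine ⟨δ / (M + 1), div_pos hδ (by linarith), fun a ha => ?_⟩
  have h1 : dist (uapp f u₀ ε a) (uapp f u₀ ε b) ≤ M * |a - b| := by
    rw [dist_eq_norm]; exact uapp_lip hf hM hε a b
  have h2 : |a - b| < δ / (M + 1) := by rwa [← Real.dist_eq]
  calc dist (uapp f u₀ ε a) (uapp f u₀ ε b) ≤ M * |a - b| := h1
    _ < δ := by
        have hc : (M + 1) * (δ / (M + 1)) = δ := mul_div_cancel₀ δ (by linarith)
        nlinarith [abs_nonneg (a - b)]

lemma uapp_integral_eq (hf : Continuous f) (hε : 0 < ε) (t : ℝ) :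
    uapp f u₀ ε t = u₀ + ∫ s in (0:ℝ)..(sig ε t), f (uapp f u₀ ε s) := by
  set m := ⌈|t| / ε⌉₊ with hm
  rcases Nat.eq_zero_or_pos m with h0 | hpos
  · have ht0 : t = 0 := by
      have := Nat.ceil_eq_zero.mp (hm ▸ h0)
      have h2 : |t| / ε ≤ 0 := this
      have : |t| ≤ 0 := by
        by_contra hc
        push_neg at hc
        exact absurd (div_pos hc hε) (by linarith)
      rw [← abs_nonpos_iff]; exact this
    subst ht0
    rw [uapp_zero hf hε, sig_zero ε hε, intervalIntegral.integral_same, add_zero]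
  · obtain ⟨k, hk⟩ : ∃ k, m = k + 1 := ⟨m - 1, (Nat.succ_pred_eq_of_pos hpos).symm⟩
    have heq : uapp f u₀ ε t = tonelli f u₀ ε (m+1) t :=
      uapp_eq hf hε (le_ceil_mul hε t)
    rw [heq]
    show u₀ + _ = u₀ + _
    congr 1
    apply intervalIntegral.integral_congr
    intro s hs
    have h1 : |s| ≤ |sig ε t| := abs_le_of_mem_uIcc hs
    have h2 : |sig ε t| ≤ max (|t| - ε) 0 := sig_abs_le ε hε t
    have h3 : |s| ≤ (k : ℝ) * ε := by
      have ht : |t| ≤ ((k:ℝ) + 1) * ε := by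
        have := le_ceil_mul hε t
        rw [← hm, hk] at this
        push_cast at this
        linarith
      rcases max_cases (|t| - ε) 0 with ⟨he, _⟩ | ⟨he, _⟩ <;> rw [he] at h2 <;>
        nlinarith [mul_nonneg (Nat.cast_nonneg (α := ℝ) k) hε.le]
    have h4 : uapp f u₀ ε s = tonelli f u₀ ε (k+1) s := uapp_eq hf hε h3
    show f (tonelli f u₀ ε m s) = f (uapp f u₀ ε s)
    rw [hk]
    exact (congrArg f h4).symm

lemma uapp_defect (hf : Continuous f) (hM : ∀ x, ‖f x‖ ≤ M) (hε : 0 < ε) (t : ℝ) :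
    ‖uapp f u₀ ε t - u₀ - ∫ s in (0:ℝ)..t, f (uapp f u₀ ε s)‖ ≤ M * ε := by
  have hc : Continuous fun s => f (uapp f u₀ ε s) := hf.comp (uapp_cont hf hM hε)
  have key : uapp f u₀ ε t - u₀ - (∫ s in (0:ℝ)..t, f (uapp f u₀ ε s))
      = ∫ s in t..(sig ε t), f (uapp f u₀ ε s) := by
    rw [uapp_integral_eq hf hε t]
    rw [add_sub_cancel_left]
    exact intervalIntegral.integral_interval_sub_left
      (hc.intervalIntegrable _ _) (hc.intervalIntegrable _ _)
  rw [key]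
  calc ‖∫ s in t..(sig ε t), f (uapp f u₀ ε s)‖
      ≤ M * |sig ε t - t| :=
        intervalIntegral.norm_integral_le_of_norm_le_const (fun x _ => hM _)
    _ ≤ M * ε := mul_le_mul_of_nonneg_left
        (by rw [abs_sub_comm]; exact sig_close ε hε t) (M_nonneg hM)




end Tonelli

section Peano

variable {E : Type*} [NormedAddCommGroup E] [NormedSpace ℝ E] [FiniteDimensional ℝ E]


theorem peano (f : E → E) (hf : Continuous f) (M : ℝ) (hM : ∀ x, ‖f x‖ ≤ M) (u₀ : E) :
    ∃ u : ℝ → E, u 0 = u₀ ∧ ∀ t, HasDerivAt u (f (u t)) t := by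
  have hMn : 0 ≤ M := le_trans (norm_nonneg _) (hM 0)
  set Mn : NNReal := ⟨M, hMn⟩ with hMndef
  have hMc : (Mn : ℝ) = M := rfl
  -- the approximations
  have hεpos : ∀ n : ℕ, (0:ℝ) < 1 / (n + 1) := fun n => by positivity
  set v : ℕ → ℝ → E := fun n => uapp f u₀ (1 / (n + 1)) with hv
  have vlip : ∀ n, LipschitzWith Mn (v n) := by
    intro n
    apply LipschitzWith.of_dist_le_mul
    intro a b
    rw [dist_eq_norm, Real.dist_eq, hMc]
    exact uapp_lip hf hM (hεpos n) a b
  have vzero : ∀ n, v n 0 = u₀ := fun n => uapp_zero hf (hεpos n)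
  set V : ℕ → C(ℝ, E) := fun n => ⟨v n, (vlip n).continuous⟩ with hV
  -- the compact set
  set S : Set C(ℝ, E) := {g | LipschitzWith Mn ⇑g ∧ g 0 = u₀} with hS
  have hVS : ∀ n, V n ∈ S := fun n => ⟨vlip n, vzero n⟩
  set T : Set (ℝ → E) := {g | LipschitzWith Mn g ∧ g 0 = u₀} with hT
  have hTim : (fun g : C(ℝ, E) => ⇑g) '' S = T := by
    ext g
    constructor
    · rintro ⟨G, hG, rfl⟩; exact hG
    · rintro ⟨h1, h2⟩; exact ⟨⟨g, h1.continuous⟩, ⟨h1, h2⟩, rfl⟩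
  have hTsub : T ⊆ Set.pi Set.univ (fun t : ℝ => Metric.closedBall u₀ (M * |t|)) := by
    rintro g ⟨h1, h2⟩ t _
    rw [Metric.mem_closedBall, ← h2]
    calc dist (g t) (g 0) ≤ Mn * dist t 0 := h1.dist_le_mul t 0
      _ = M * |t| := by rw [hMc, Real.dist_eq, sub_zero]
  have hTclosed : IsClosed T := by
    have : T = {g : ℝ → E | g 0 = u₀} ∩
        ⋂ (x : ℝ), ⋂ (y : ℝ), {g : ℝ → E | dist (g x) (g y) ≤ Mn * dist x y} := by
      ext g
      simp only [hT, Set.mem_setOf_eq, Set.mem_inter_iff, Set.mem_iInter,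
        lipschitzWith_iff_dist_le_mul]
      tauto
    rw [this]
    refine IsClosed.inter (isClosed_eq (continuous_apply 0) continuous_const) ?_
    exact isClosed_iInter fun x => isClosed_iInter fun y =>
      isClosed_le ((continuous_apply x).dist (continuous_apply y)) continuous_const
  have hTcomp : IsCompact T := by
    refine IsCompact.of_isClosed_subset ?_ hTclosed hTsub
    exact isCompact_univ_pi fun t => isCompact_closedBall _ _
  have hequi : Equicontinuous ((↑) : S → ℝ → E) := by
    intro x
    rw [Metric.equicontinuousAt_iff]
    intro δ hδ
    refine ⟨δ / (M + 1), by positivity, fun y hy g => ?_⟩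
    rw [dist_comm] at hy
    calc dist (g.1 x) (g.1 y) ≤ Mn * dist x y := g.2.1.dist_le_mul x y
      _ ≤ M * (δ / (M + 1)) := by
          rw [hMc]; exact mul_le_mul_of_nonneg_left hy.le hMn
      _ < δ := by
          rw [div_eq_inv_mul, ← mul_assoc]
          have h1 : M * (M + 1)⁻¹ < 1 := by
            rw [mul_inv_lt_iff₀ (by linarith)]; linarith
          nlinarith
  have hScomp : IsCompact S := by
    refine ArzelaAscoli.isCompact_of_equicontinuous S ?_ hequi
    have : ContinuousMap.toFun '' S = T := hTim
    rw [this]; exact hTcomp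
  -- extract convergent subsequence
  obtain ⟨u, huS, φ, hφmono, hφtendsto⟩ := hScomp.tendsto_subseq hVS
  -- pointwise convergence
  have hptws : ∀ t : ℝ, Filter.Tendsto (fun k => v (φ k) t) Filter.atTop (𝓝 (u t)) := by
    intro t
    have : Filter.Tendsto (fun k => (V (φ k)) t) Filter.atTop (𝓝 (u t)) :=
      ((continuous_eval_const t).tendsto u).comp hφtendsto
    exact this
  -- integral equation
  have hueq : ∀ t : ℝ, u t = u₀ + ∫ s in (0:ℝ)..t, f (u s) := by
    intro t
    have hIlim : Filter.Tendsto (fun k => ∫ s in (0:ℝ)..t, f (v (φ k) s)) Filter.atTop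
        (𝓝 (∫ s in (0:ℝ)..t, f (u s))) := by
      apply intervalIntegral.tendsto_integral_filter_of_dominated_convergence
        (fun _ => M)
      · exact Filter.Eventually.of_forall fun k =>
          (hf.comp (uapp_cont hf hM (hεpos (φ k)))).aestronglyMeasurable.restrict
      · exact Filter.Eventually.of_forall fun k =>
          Filter.Eventually.of_forall fun s _ => hM _
      · exact intervalIntegrable_const
      · exact Filter.Eventually.of_forall fun s _ =>
          (hf.continuousAt.tendsto).comp (hptws s)
    have hAlim : Filter.Tendsto
        (fun k => v (φ k) t - u₀ - ∫ s in (0:ℝ)..t, f (v (φ k) s)) Filter.atTop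
        (𝓝 (u t - u₀ - ∫ s in (0:ℝ)..t, f (u s))) :=
      ((hptws t).sub tendsto_const_nhds).sub hIlim
    have hnormlim : Filter.Tendsto
        (fun k => ‖v (φ k) t - u₀ - ∫ s in (0:ℝ)..t, f (v (φ k) s)‖) Filter.atTop
        (𝓝 ‖u t - u₀ - ∫ s in (0:ℝ)..t, f (u s)‖) := hAlim.norm
    have hbound : ∀ k, ‖v (φ k) t - u₀ - ∫ s in (0:ℝ)..t, f (v (φ k) s)‖
        ≤ M * (1 / (φ k + 1)) := fun k => uapp_defect hf hM (hεpos (φ k)) t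
    have hblim : Filter.Tendsto (fun k => M * (1 / ((φ k : ℝ) + 1))) Filter.atTop (𝓝 0) := by
      rw [show (0:ℝ) = M * 0 by ring]
      apply Filter.Tendsto.const_mul
      have h1 : Filter.Tendsto (fun n : ℕ => 1 / ((n : ℝ) + 1)) Filter.atTop (𝓝 0) :=
        tendsto_one_div_add_atTop_nhds_zero_nat
      exact h1.comp hφmono.tendsto_atTop
    have hle : ‖u t - u₀ - ∫ s in (0:ℝ)..t, f (u s)‖ ≤ 0 :=
      le_of_tendsto_of_tendsto' hnormlim hblim hbound
    have : u t - u₀ - ∫ s in (0:ℝ)..t, f (u s) = 0 :=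
      norm_le_zero_iff.mp hle
    rw [sub_sub, sub_eq_zero] at this
    exact this
  -- conclude via FTC
  have hg : Continuous fun s => f (u s) := hf.comp u.continuous
  have hderiv : ∀ t : ℝ, HasDerivAt (fun x => u₀ + ∫ s in (0:ℝ)..x, f (u s)) (f (u t)) t := by
    intro t
    exact (intervalIntegral.integral_hasDerivAt_right
      (hg.intervalIntegrable _ _)
      hg.stronglyMeasurable.stronglyMeasurableAtFilter
      hg.continuousAt).const_add u₀
  have hfun : (fun x => u₀ + ∫ s in (0:ℝ)..x, f (u s)) = ⇑u :=
    funext fun t => (hueq t).symm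
  refine ⟨⇑u, huS.2, fun t => ?_⟩
  have h := hderiv t
  rw [hfun] at h
  exact h

end Peano



theorem stmt7_bound (N : ℕ) (hN : 0 < N) (d : ℤ) (χ : ℤ) (α : ℝ)
    (K : (Fin N → ℝ) → (Fin N) → ℝ)
    (hKbound : ∀ u i, ((2 : ℝ) - d) * Real.pi ≤ K u i ∧ K u i ≤ 2 * Real.pi)
    (s : (Fin N → ℝ) → ℝ)
    (hs : ∀ u, s u = 2 * Real.pi * χ / (∑ j, Real.exp (u j) ^ α)) :
    ∀ u i, |s u * Real.exp (u i) ^ α - K u i| ≤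
      2 * Real.pi * |(χ : ℝ)| + max |(2 : ℝ) - d| 2 * Real.pi := by
  intro u i
  have hpi := Real.pi_pos
  haveI : Nonempty (Fin N) := ⟨⟨0, hN⟩⟩
  have hterm : ∀ j, (0:ℝ) < Real.exp (u j) ^ α :=
    fun j => Real.rpow_pos_of_pos (Real.exp_pos _) α
  have hsum : (0:ℝ) < ∑ j, Real.exp (u j) ^ α :=
    Finset.sum_pos (fun j _ => hterm j) Finset.univ_nonempty
  have hle : Real.exp (u i) ^ α ≤ ∑ j, Real.exp (u j) ^ α :=
    Finset.single_le_sum (fun j _ => (hterm j).le) (Finset.mem_univ i)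
  have h1 : |s u * Real.exp (u i) ^ α| ≤ 2 * Real.pi * |(χ : ℝ)| := by
    rw [hs u, abs_mul, abs_div, abs_mul, abs_mul,
      abs_of_pos hsum, abs_of_pos (hterm i), abs_of_pos hpi,
      abs_of_pos (by norm_num : (0:ℝ) < 2)]
    rw [div_mul_eq_mul_div, div_le_iff₀ hsum]
    have h2 : 2 * Real.pi * |(χ:ℝ)| * (Real.exp (u i) ^ α)
        ≤ 2 * Real.pi * |(χ:ℝ)| * (∑ j, Real.exp (u j) ^ α) := by
      apply mul_le_mul_of_nonneg_left hle
      positivity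
    linarith
  have h2 : |K u i| ≤ max |(2 : ℝ) - d| 2 * Real.pi := by
    obtain ⟨hlo, hhi⟩ := hKbound u i
    rw [abs_le]
    constructor
    · have ha : -(|(2:ℝ) - d| * Real.pi) ≤ ((2:ℝ) - d) * Real.pi := by
        have := neg_abs_le ((2:ℝ) - d)
        nlinarith
      have hb : |(2:ℝ) - d| * Real.pi ≤ max |(2 : ℝ) - d| 2 * Real.pi :=
        mul_le_mul_of_nonneg_right (le_max_left _ _) hpi.le
      linarith
    · have hb : 2 * Real.pi ≤ max |(2 : ℝ) - d| 2 * Real.pi :=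
        mul_le_mul_of_nonneg_right (le_max_right _ _) hpi.le
      linarith
  calc |s u * Real.exp (u i) ^ α - K u i|
      ≤ |s u * Real.exp (u i) ^ α| + |K u i| := abs_sub _ _
    _ ≤ 2 * Real.pi * |(χ : ℝ)| + max |(2 : ℝ) - d| 2 * Real.pi := add_le_add h1 h2



/-- For the `α`-flow `duᵢ/dt = s_α rᵢ^α - Kᵢ(u)` with `rᵢ = e^{uᵢ}`
and `s_α = 2πχ/∑ⱼ rⱼ^α`, if `K` is continuous with `(2-d)π ≤ Kᵢ ≤ 2π`, then the
right-hand side is uniformly bounded by `2π|χ| + max{|2-d|,2}π`, and every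
initial condition admits a solution defined for all `t ∈ (-∞, +∞)`. -/
theorem stmt7 (N : ℕ) (hN : 0 < N) (d : ℤ) (χ : ℤ) (α : ℝ)
    (K : (Fin N → ℝ) → (Fin N) → ℝ)
    (hKcont : Continuous K)
    (hKbound : ∀ u i, ((2 : ℝ) - d) * Real.pi ≤ K u i ∧ K u i ≤ 2 * Real.pi)
    (s : (Fin N → ℝ) → ℝ)
    (hs : ∀ u, s u = 2 * Real.pi * χ / (∑ j, Real.exp (u j) ^ α)) :
    (∀ u i, |s u * Real.exp (u i) ^ α - K u i| ≤
      2 * Real.pi * |(χ : ℝ)| + max |(2 : ℝ) - d| 2 * Real.pi) ∧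
    (∀ u₀ : Fin N → ℝ, ∃ u : ℝ → (Fin N → ℝ), u 0 = u₀ ∧
      ∀ (t : ℝ) (i : Fin N),
        HasDerivAt (fun τ => u τ i) (s (u t) * Real.exp (u t i) ^ α - K (u t) i) t) := by
  have hbd := stmt7_bound N hN d χ α K hKbound s hs
  refine ⟨hbd, ?_⟩
  haveI : Nonempty (Fin N) := ⟨⟨0, hN⟩⟩
  set F : (Fin N → ℝ) → (Fin N → ℝ) :=
    fun u i => s u * Real.exp (u i) ^ α - K u i with hF
  have hscont : Continuous s := by
    have hsfun : s = fun u => 2 * Real.pi * χ / (∑ j, Real.exp ((u j) * α)) := by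
      funext u
      rw [hs u]
      congr 1
      exact Finset.sum_congr rfl fun j _ => (Real.exp_mul (u j) α).symm
    rw [hsfun]
    apply Continuous.div continuous_const
    · exact continuous_finset_sum _ fun j _ =>
        Real.continuous_exp.comp ((continuous_apply j).mul continuous_const)
    · intro u
      have : (0:ℝ) < ∑ j, Real.exp (u j * α) :=
        Finset.sum_pos (fun j _ => Real.exp_pos _) Finset.univ_nonempty
      exact ne_of_gt this
  have hFcont : Continuous F := by
    apply continuous_pi
    intro i
    apply Continuous.sub
    · apply hscont.mul
      have : (fun u : Fin N → ℝ => Real.exp (u i) ^ α)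
          = fun u => Real.exp (u i * α) := by
        funext u; exact (Real.exp_mul (u i) α).symm
      rw [this]
      exact Real.continuous_exp.comp ((continuous_apply i).mul continuous_const)
    · exact (continuous_apply i).comp hKcont
  set B : ℝ := 2 * Real.pi * |(χ : ℝ)| + max |(2 : ℝ) - d| 2 * Real.pi with hB
  have hBnn : 0 ≤ B := by
    have hpi := Real.pi_pos
    have h1 : (0:ℝ) ≤ 2 * Real.pi * |(χ : ℝ)| := by positivity
    have h2 : (0:ℝ) ≤ max |(2 : ℝ) - d| 2 * Real.pi := by
      apply mul_nonneg (le_trans (by norm_num) (le_max_right |(2 : ℝ) - d| 2)) hpi.le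
    linarith
  have hFbound : ∀ x, ‖F x‖ ≤ B := by
    intro x
    rw [pi_norm_le_iff_of_nonneg hBnn]
    intro i
    rw [Real.norm_eq_abs]
    exact hbd x i
  intro u₀
  obtain ⟨u, hu0, hud⟩ := peano F hFcont B hFbound u₀
  exact ⟨u, hu0, fun t i => hasDerivAt_pi.mp (hud t) i⟩
end

section
/- Let Λ be a symmetric positive semi-definite N×N matrix with rank N-1 and kernel span{r}, where r ∈ ℝ^N_{>0}, and let Σ = diag(r₁,...,r_N). Suppose at a point r* one has K = s_α (r*)^α componentwise with s_α = (Σᵢ K_i r*_i)/‖r*‖_{α+1}^{α+1}. If the smallest positive eigenvalue of Λ̃ = Σ^{(1-α)/2} Λ Σ^{(1-α)/2} exceeds α s_α, then the matrix Λ - α s_α (diag(r_i^{α-1}) - r^α(r^α)ᵀ/‖r‖_{α+1}^{α+1}) evaluated at r* is positive semi-definite with rank N-1 and kernel span{r*}. -/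
open scoped BigOperators Matrix RealInnerProductSpace

/-!
Conjugating by `D = diag(r^{(1-α)/2})` turns `M` into `Λ̃ - α s P`, where `P = 1 - v vᵀ / ‖v‖²`
is the orthogonal projection onto `v⊥` for `v = r^{(α+1)/2} = D⁻¹ r`, the generator of `ker Λ̃`.
For `y = w + c v` with `w ⊥ v`, the quadratic form of `Λ̃ - α s P` at `y` is
`⟨Λ̃ w, w⟩ - α s ‖w‖²`, and expanding `w` in an eigenbasis of `Λ̃` shows that this is positive
unless `w = 0`, because `w` only meets eigenvectors with nonzero eigenvalue and these exceed
`α s`. So `Λ̃ - α s P` is positive semidefinite with kernel `span v`; undoing the congruence gives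
the same for `M` with kernel `span r`, and the rank follows by rank–nullity.
-/

theorem LinearMap.IsSymmetric.mul_norm_sq_lt_inner_map_self {E : Type*} [NormedAddCommGroup E]
    [InnerProductSpace ℝ E] [FiniteDimensional ℝ E] {T : E →ₗ[ℝ] E} (hT : T.IsSymmetric)
    {t : ℝ} (ht : ∀ (μ : ℝ) (x : E), x ≠ 0 → T x = μ • x → μ ≠ 0 → t < μ)
    {w : E} (hw : ∀ x, T x = 0 → ⟪x, w⟫ = 0) (hw0 : w ≠ 0) :
    t * ‖w‖ ^ 2 < ⟪T w, w⟫ := by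
  set b := hT.eigenvectorBasis rfl
  set μ := hT.eigenvalues rfl
  have hb (i) : T (b i) = μ i • b i := hT.apply_eigenvectorBasis rfl i
  have hnorm : ‖w‖ ^ 2 = ∑ i, ⟪b i, w⟫ ^ 2 := (b.sum_sq_inner_right w).symm
  have hform : ⟪T w, w⟫ = ∑ i, μ i * ⟪b i, w⟫ ^ 2 := by
    rw [← b.sum_inner_mul_inner]
    refine Finset.sum_congr rfl fun i _ => ?_
    rw [hT, hb, real_inner_smul_right, real_inner_comm w]
    ring
  have hlt (i) (hi : ⟪b i, w⟫ ≠ 0) : t < μ i := by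
    refine ht _ _ (b.orthonormal.ne_zero i) (hb i) fun hμ => hi (hw _ ?_)
    rw [hb, hμ, zero_smul]
  obtain ⟨i, hi⟩ : ∃ i, ⟪b i, w⟫ ≠ 0 := by
    by_contra! h
    exact hw0 (by simpa [h] using hnorm)
  rw [hnorm, hform, Finset.mul_sum]
  refine Finset.sum_lt_sum (fun j _ => ?_) ⟨i, Finset.mem_univ i, ?_⟩
  · by_cases hj : ⟪b j, w⟫ = 0
    · simp [hj]
    · exact mul_le_mul_of_nonneg_right (hlt j hj).le (sq_nonneg _)
  · exact mul_lt_mul_of_pos_right (hlt i hi) (by positivity)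

namespace Matrix

variable {ι : Type*} [Fintype ι] [DecidableEq ι]

theorem IsHermitian.mul_dotProduct_self_lt_dotProduct_mulVec {A : Matrix ι ι ℝ}
    (hA : A.IsHermitian) {t : ℝ}
    (ht : ∀ (μ : ℝ) (x : ι → ℝ), x ≠ 0 → A *ᵥ x = μ • x → μ ≠ 0 → t < μ) {w : ι → ℝ} (hw : ∀ x, A *ᵥ x = 0 → x ⬝ᵥ w = 0) (hw0 : w ≠ 0) :
    t * (w ⬝ᵥ w) < w ⬝ᵥ A *ᵥ w := by
  have key := (isSymmetric_toEuclideanLin_iff.mpr hA).mul_norm_sq_lt_inner_map_self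
    (t := t) (w := WithLp.toLp 2 w) ?_ ?_ ?_
  · rwa [← real_inner_self_eq_norm_sq, real_inner_comm] at key
  · intro μ x hx0 hx hμ
    exact ht μ x.ofLp (by simpa using hx0) (congrArg WithLp.ofLp hx) hμ
  · intro x hx
    exact (dotProduct_comm _ _).trans (hw x.ofLp (congrArg WithLp.ofLp hx))
  · simpa using hw0

theorem posSemidef_diagonal_mul_mul_diagonal_iff {d : ι → ℝ} (hd : ∀ i, d i ≠ 0)
    {A : Matrix ι ι ℝ} : (diagonal d * A * diagonal d).PosSemidef ↔ A.PosSemidef := by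
  have hU : IsUnit (diagonal d) := isUnit_diagonal.mpr (Pi.isUnit_iff.mpr fun i => (hd i).isUnit)
  have h := IsUnit.posSemidef_star_left_conjugate_iff hU (x := A)
  rwa [star_eq_conjTranspose, diagonal_conjTranspose, star_trivial] at h

theorem ker_diagonal_mul_mul_diagonal_iff {d : ι → ℝ} (hd : ∀ i, d i ≠ 0)
    (A : Matrix ι ι ℝ) (u : ι → ℝ) :
    (∀ x, (diagonal d * A * diagonal d) *ᵥ x = 0 ↔ ∃ t : ℝ, x = t • u) ↔
      ∀ y, A *ᵥ y = 0 ↔ ∃ t : ℝ, y = t • (d * u) := by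
  have hcancel (x z : ι → ℝ) : d * x = d * z ↔ x = z :=
    ⟨fun h => funext fun i => mul_left_cancel₀ (hd i) (congrFun h i), congrArg _⟩
  have hdiag (x : ι → ℝ) : diagonal d *ᵥ x = d * x := funext (mulVec_diagonal d x)
  have hconj (x : ι → ℝ) : (diagonal d * A * diagonal d) *ᵥ x = 0 ↔ A *ᵥ (d * x) = 0 := by
    rw [← mulVec_mulVec, ← mulVec_mulVec, hdiag, hdiag]
    conv_lhs => rw [← mul_zero d, hcancel]
  have hline (x : ι → ℝ) (t : ℝ) : d * x = t • (d * u) ↔ x = t • u := by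
    rw [← mul_smul_comm, hcancel]
  constructor
  · intro h y
    obtain ⟨x, rfl⟩ : ∃ x, y = d * x :=
      ⟨d⁻¹ * y, funext fun i => (mul_inv_cancel_left₀ (hd i) (y i)).symm⟩
    rw [← hconj, h]
    exact exists_congr fun t => (hline x t).symm
  · intro h x
    rw [hconj, h]
    exact exists_congr (hline x)

theorem dotProduct_mulVec_sub_smul_projection {A : Matrix ι ι ℝ} (hA : A.IsHermitian)
    {v : ι → ℝ} (hAv : A *ᵥ v = 0) (β : ℝ) (y : ι → ℝ) :
    y ⬝ᵥ (A - β • (1 - (v ⬝ᵥ v)⁻¹ • vecMulVec v v)) *ᵥ y =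
      (y - ((v ⬝ᵥ y) / (v ⬝ᵥ v)) • v) ⬝ᵥ A *ᵥ (y - ((v ⬝ᵥ y) / (v ⬝ᵥ v)) • v) -
        β * ((y - ((v ⬝ᵥ y) / (v ⬝ᵥ v)) • v) ⬝ᵥ (y - ((v ⬝ᵥ y) / (v ⬝ᵥ v)) • v)) := by
  have hvA : v ⬝ᵥ A *ᵥ y = 0 := by
    rw [dotProduct_mulVec, ← mulVec_transpose, ← conjTranspose_eq_transpose_of_trivial, hA.eq,
      hAv, zero_dotProduct]
  simp only [sub_mulVec, smul_mulVec, one_mulVec, vecMulVec_mulVec, mulVec_sub, mulVec_smul,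
    hAv, dotProduct_sub, sub_dotProduct, dotProduct_smul, smul_dotProduct, hvA, smul_zero,
    sub_zero, smul_eq_mul, op_smul_eq_smul, dotProduct_comm y v]
  rcases eq_or_ne (v ⬝ᵥ v) 0 with h | h
  · simp [h]
  · field_simp
    ring

theorem IsHermitian.posSemidef_sub_smul_projection {A : Matrix ι ι ℝ} (hA : A.IsHermitian)
    {v : ι → ℝ} (hv : v ≠ 0) (hker : ∀ x, A *ᵥ x = 0 ↔ ∃ t : ℝ, x = t • v) {β : ℝ}
    (heig : ∀ (μ : ℝ) (x : ι → ℝ), x ≠ 0 → A *ᵥ x = μ • x → μ ≠ 0 → β < μ) :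
    (A - β • (1 - (v ⬝ᵥ v)⁻¹ • vecMulVec v v)).PosSemidef ∧
      ∀ x, (A - β • (1 - (v ⬝ᵥ v)⁻¹ • vecMulVec v v)) *ᵥ x = 0 ↔ ∃ t : ℝ, x = t • v := by
  set B := A - β • (1 - (v ⬝ᵥ v)⁻¹ • vecMulVec v v)
  have hvv : v ⬝ᵥ v ≠ 0 := mt dotProduct_self_eq_zero.mp hv
  have hAv : A *ᵥ v = 0 := (hker v).2 ⟨1, (one_smul ℝ v).symm⟩
  have hform (y : ι → ℝ) : 0 ≤ y ⬝ᵥ B *ᵥ y ∧ (y ⬝ᵥ B *ᵥ y = 0 → ∃ t : ℝ, y = t • v) := by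
    rw [dotProduct_mulVec_sub_smul_projection hA hAv]
    set w := y - ((v ⬝ᵥ y) / (v ⬝ᵥ v)) • v with hw_def
    by_cases hw : w = 0
    · exact ⟨by simp [hw], fun _ => ⟨_, sub_eq_zero.mp hw⟩⟩
    have hperp (x : ι → ℝ) (hx : A *ᵥ x = 0) : x ⬝ᵥ w = 0 := by
      obtain ⟨t, rfl⟩ := (hker x).1 hx
      rw [hw_def, smul_dotProduct, dotProduct_sub, dotProduct_smul, smul_eq_mul,
        smul_eq_mul, div_mul_cancel₀ _ hvv, sub_self, mul_zero]
    have := hA.mul_dotProduct_self_lt_dotProduct_mulVec heig hperp hw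
    exact ⟨by linarith, fun h => by linarith⟩
  have hB : B.IsHermitian := by
    have hvec : (vecMulVec v v).IsHermitian := by
      simpa using (posSemidef_vecMulVec_self_star v).isHermitian
    exact hA.sub ((isHermitian_one.sub (hvec.smul (IsSelfAdjoint.all _))).smul
      (IsSelfAdjoint.all _))
  refine ⟨posSemidef_iff_dotProduct_mulVec.mpr ⟨hB, fun x => (hform x).1⟩, fun x => ⟨?_, ?_⟩⟩
  · intro h
    exact (hform x).2 (by rw [h, dotProduct_zero])
  · rintro ⟨t, rfl⟩
    simp only [B, mulVec_smul, sub_mulVec, smul_mulVec, one_mulVec, vecMulVec_mulVec, hAv,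
      op_smul_eq_smul, smul_smul, inv_mul_cancel₀ hvv, one_smul, sub_self, smul_zero]

theorem diagonal_mul_sub_smul_mul_diagonal (d e p : ι → ℝ) (X : Matrix ι ι ℝ) (c k : ℝ) :
    diagonal d * (X - c • (diagonal e - k • vecMulVec p p)) * diagonal d =
      diagonal d * X * diagonal d - c • (diagonal (d * e * d) - k • vecMulVec (d * p) (d * p)) := by
  ext i j
  simp only [diagonal_mul, mul_diagonal, sub_apply, smul_apply, diagonal_apply,
    vecMulVec_apply, Pi.mul_apply, smul_eq_mul]
  split_ifs with h
  · subst h; ring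
  · ring

theorem diagonal_rpow_mul_sub_smul_mul_diagonal_rpow {r : ι → ℝ} (hr : ∀ i, 0 < r i)
    (α c : ℝ) (X : Matrix ι ι ℝ) :
    diagonal (fun i => r i ^ ((1 - α) / 2)) *
        (X - c • (diagonal (fun i => r i ^ (α - 1)) -
          (∑ i, r i ^ (α + 1))⁻¹ • vecMulVec (fun i => r i ^ α) (fun i => r i ^ α))) *
        diagonal (fun i => r i ^ ((1 - α) / 2)) =
      diagonal (fun i => r i ^ ((1 - α) / 2)) * X * diagonal (fun i => r i ^ ((1 - α) / 2)) -
        c • (1 - ((fun i => r i ^ ((α + 1) / 2)) ⬝ᵥ (fun i => r i ^ ((α + 1) / 2)))⁻¹ •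
          vecMulVec (fun i => r i ^ ((α + 1) / 2)) (fun i => r i ^ ((α + 1) / 2))) := by
  have hpow (i : ι) (p q : ℝ) : r i ^ p * r i ^ q = r i ^ (p + q) :=
    (Real.rpow_add (hr i) p q).symm
  have hdiag : (fun i => r i ^ ((1 - α) / 2)) * (fun i => r i ^ (α - 1)) *
      (fun i => r i ^ ((1 - α) / 2)) = 1 := funext fun i => by
    simp only [Pi.mul_apply, hpow, Pi.one_apply]
    rw [show (1 - α) / 2 + (α - 1) + (1 - α) / 2 = 0 by ring, Real.rpow_zero]
  have hvec : (fun i => r i ^ ((1 - α) / 2)) * (fun i => r i ^ α) =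
      fun i => r i ^ ((α + 1) / 2) := funext fun i => by
    simp only [Pi.mul_apply, hpow]
    ring_nf
  have hnorm : ∑ i, r i ^ (α + 1) =
      (fun i => r i ^ ((α + 1) / 2)) ⬝ᵥ (fun i => r i ^ ((α + 1) / 2)) :=
    Finset.sum_congr rfl fun i _ => by
      simp only [hpow]
      ring_nf
  rw [diagonal_mul_sub_smul_mul_diagonal, hdiag, hvec, diagonal_one', hnorm]

theorem rank_eq_card_sub_one_of_ker_eq_span {K m n : Type*} [Field K] [Fintype m] [Fintype n]
    {M : Matrix m n K} {r : n → K} (hr : r ≠ 0) (hker : ∀ x, M *ᵥ x = 0 ↔ ∃ t : K, x = t • r) :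
    M.rank = Fintype.card n - 1 := by
  have hspan : LinearMap.ker M.mulVecLin = K ∙ r := by
    ext x
    simp only [LinearMap.mem_ker, mulVecLin_apply, hker, Submodule.mem_span_singleton, eq_comm]
  have h := M.mulVecLin.finrank_range_add_finrank_ker
  rw [hspan, finrank_span_singleton hr, Module.finrank_fintype_fun_eq_card] at h
  rw [rank]
  omega

end Matrix

theorem stmt13_general (N : ℕ) (hN : 0 < N) (α : ℝ)
    (Λ : Matrix (Fin N) (Fin N) ℝ) (r : Fin N → ℝ) (hr : ∀ i, 0 < r i)
    (hΛ : Λ.PosSemidef)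
    (hker : ∀ x : Fin N → ℝ, Λ.mulVec x = 0 ↔ ∃ t : ℝ, x = t • r)
    (s : ℝ)
    (Λt : Matrix (Fin N) (Fin N) ℝ)
    (hΛt : Λt = Matrix.diagonal (fun i => r i ^ ((1 - α) / 2)) * Λ *
      Matrix.diagonal (fun i => r i ^ ((1 - α) / 2)))
    (heig : ∀ (μ : ℝ) (x : Fin N → ℝ), x ≠ 0 → Λt.mulVec x = μ • x → μ ≠ 0 →
      α * s < μ)
    (M : Matrix (Fin N) (Fin N) ℝ)
    (hM : M = Λ - (α * s) • (Matrix.diagonal (fun i => r i ^ (α - 1)) -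
      (∑ i, r i ^ (α + 1))⁻¹ •
        Matrix.vecMulVec (fun i => r i ^ α) (fun i => r i ^ α))) :
    M.PosSemidef ∧ M.rank = N - 1 ∧
    (∀ x : Fin N → ℝ, M.mulVec x = 0 ↔ ∃ t : ℝ, x = t • r) := by
  set a : Fin N → ℝ := fun i => r i ^ ((1 - α) / 2)
  set v : Fin N → ℝ := fun i => r i ^ ((α + 1) / 2)
  have ha (i : Fin N) : a i ≠ 0 := (Real.rpow_pos_of_pos (hr i) _).ne'
  have hav : a * v = r := funext fun i => by
    rw [Pi.mul_apply, ← Real.rpow_add (hr i), show (1 - α) / 2 + (α + 1) / 2 = 1 by ring,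
      Real.rpow_one]
  have hr0 : r ≠ 0 := fun h => (hr ⟨0, hN⟩).ne' (congrFun h _)
  have hv : v ≠ 0 := fun h => hr0 (by rw [← hav, h, mul_zero])
  have hΛt_ker : ∀ x, Λt *ᵥ x = 0 ↔ ∃ t : ℝ, x = t • v := by
    rw [hΛt, Matrix.ker_diagonal_mul_mul_diagonal_iff ha, hav]
    exact hker
  have hΛt_herm : Λt.IsHermitian :=
    (hΛt ▸ (Matrix.posSemidef_diagonal_mul_mul_diagonal_iff ha).mpr hΛ).isHermitian
  obtain ⟨hpsd, hker_conj⟩ := hΛt_herm.posSemidef_sub_smul_projection hv hΛt_ker heig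
  rw [hΛt, ← Matrix.diagonal_rpow_mul_sub_smul_mul_diagonal_rpow hr, ← hM] at hpsd hker_conj
  have hM_ker : ∀ x, M *ᵥ x = 0 ↔ ∃ t : ℝ, x = t • r :=
    hav ▸ (Matrix.ker_diagonal_mul_mul_diagonal_iff ha M v).mp hker_conj
  refine ⟨(Matrix.posSemidef_diagonal_mul_mul_diagonal_iff ha).mp hpsd, ?_, hM_ker⟩
  simpa using Matrix.rank_eq_card_sub_one_of_ker_eq_span hr0 hM_ker

/-- Let `Λ` be symmetric PSD of rank `N-1` with kernel
`span{r*}`, `r* > 0`, `Σ = diag(r*)`, and suppose `K = s_α (r*)^α` with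
`s_α = (∑ᵢ Kᵢ r*ᵢ)/∑ᵢ (r*ᵢ)^{α+1}`. If every nonzero eigenvalue of
`Λ̃ = Σ^{(1-α)/2} Λ Σ^{(1-α)/2}` exceeds `α s_α`, then
`Λ - α s_α (diag(rᵢ^{α-1}) - r^α (r^α)ᵀ/‖r‖_{α+1}^{α+1})` at `r*` is PSD of
rank `N-1` with kernel `span{r*}`. -/
theorem stmt13 (N : ℕ) (hN : 0 < N) (α : ℝ)
    (Λ : Matrix (Fin N) (Fin N) ℝ) (r : Fin N → ℝ) (hr : ∀ i, 0 < r i)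
    (hΛ : Λ.PosSemidef) (hrank : Λ.rank = N - 1)
    (hker : ∀ x : Fin N → ℝ, Λ.mulVec x = 0 ↔ ∃ t : ℝ, x = t • r)
    (K : Fin N → ℝ) (s : ℝ)
    (hsdef : s = (∑ i, K i * r i) / (∑ i, r i ^ (α + 1)))
    (hconst : ∀ i, K i = s * r i ^ α)
    (Λt : Matrix (Fin N) (Fin N) ℝ)
    (hΛt : Λt = Matrix.diagonal (fun i => r i ^ ((1 - α) / 2)) * Λ *
      Matrix.diagonal (fun i => r i ^ ((1 - α) / 2)))
    (heig : ∀ (μ : ℝ) (x : Fin N → ℝ), x ≠ 0 → Λt.mulVec x = μ • x → μ ≠ 0 →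
      α * s < μ)
    (M : Matrix (Fin N) (Fin N) ℝ)
    (hM : M = Λ - (α * s) • (Matrix.diagonal (fun i => r i ^ (α - 1)) -
      (∑ i, r i ^ (α + 1))⁻¹ •
        Matrix.vecMulVec (fun i => r i ^ α) (fun i => r i ^ α))) :
    M.PosSemidef ∧ M.rank = N - 1 ∧
    (∀ x : Fin N → ℝ, M.mulVec x = 0 ↔ ∃ t : ℝ, x = t • r) :=
  stmt13_general N hN α Λ r hr hΛ hker s Λt hΛt heig M hM
end

section
/- Let L be a symmetric positive semi-definite N×N matrix with rank N-1 and kernel span{(1,...,1)ᵀ}, let Σ = diag(r₁,...,r_N) with all rᵢ > 0, and let R̄ ∈ ℝ^N with αR̄ᵢ ≤ 0 for all i and αR̄ᵢ < 0 for at least one i. Then the matrix L - Σ^{α/2} diag(αR̄₁,...,αR̄_N) Σ^{α/2} is positive definite. -/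
/-!
Both `L` and the diagonal correction `-Σ^{α/2} diag(αR̄) Σ^{α/2}` are positive semidefinite.
By the rank condition the kernel of `L` is the line through `(1,…,1)`, and the correction does not
vanish on that line because its `i₀`-th diagonal entry is nonzero. A sum of two positive
semidefinite matrices whose kernels meet only in `0` is positive definite.
-/

open scoped Matrix ComplexOrder

namespace Matrix

theorem PosSemidef.posDef_add_of_mulVec_eq_zero {n 𝕜 : Type*} [Fintype n] [RCLike 𝕜]
    {A B : Matrix n n 𝕜} (hA : A.PosSemidef) (hB : B.PosSemidef)
    (hAB : ∀ x, A *ᵥ x = 0 → B *ᵥ x = 0 → x = 0) : (A + B).PosDef := by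
  refine posDef_iff_dotProduct_mulVec.mpr ⟨hA.1.add hB.1, fun x hx => ?_⟩
  have hqA := hA.dotProduct_mulVec_nonneg x
  have hqB := hB.dotProduct_mulVec_nonneg x
  rw [add_mulVec, dotProduct_add]
  refine (add_nonneg hqA hqB).lt_of_ne fun hsum => hx ?_
  obtain ⟨hA0, hB0⟩ := (add_eq_zero_iff_of_nonneg hqA hqB).mp hsum.symm
  exact hAB x ((hA.dotProduct_mulVec_zero_iff x).mp hA0) ((hB.dotProduct_mulVec_zero_iff x).mp hB0)

theorem exists_smul_eq_of_mulVec_eq_zero {n K : Type*} [Fintype n] [Field K]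
    {A : Matrix n n K} {v : n → K} (hv : v ≠ 0) (hAv : A *ᵥ v = 0)
    (hrank : A.rank = Fintype.card n - 1) {x : n → K} (hx : A *ᵥ x = 0) :
    ∃ c : K, c • v = x := by
  have hker : Module.finrank K (LinearMap.ker A.mulVecLin) = 1 := by
    have h := LinearMap.finrank_range_add_finrank_ker A.mulVecLin
    rw [Module.finrank_fintype_fun_eq_card, ← Matrix.rank] at h
    have : 0 < Fintype.card n := Fintype.card_pos_iff.mpr (Function.ne_iff.mp hv).nonempty
    omega
  have hspan : Submodule.span K {v} = LinearMap.ker A.mulVecLin :=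
    Submodule.eq_of_le_of_finrank_eq
      ((Submodule.span_singleton_le_iff_mem _ _).mpr hAv)
      (by rw [finrank_span_singleton hv, hker])
  exact Submodule.mem_span_singleton.mp (hspan ▸ hx : x ∈ Submodule.span K {v})

end Matrix

theorem stmt16_general (N : ℕ) (α : ℝ)
    (L : Matrix (Fin N) (Fin N) ℝ) (hL : L.PosSemidef) (hrank : L.rank = N - 1)
    (hker : L.mulVec (fun _ => 1) = 0)
    (r : Fin N → ℝ) (hr : ∀ i, 0 < r i)
    (R : Fin N → ℝ) (hR : ∀ i, α * R i ≤ 0) (hR' : ∃ i, α * R i < 0) :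
    (L - Matrix.diagonal (fun i => r i ^ (α / 2)) *
        Matrix.diagonal (fun i => α * R i) *
        Matrix.diagonal (fun i => r i ^ (α / 2))).PosDef := by
  obtain ⟨i₀, hi₀⟩ := hR'
  rw [Matrix.diagonal_mul_diagonal, Matrix.diagonal_mul_diagonal, sub_eq_add_neg,
    Matrix.diagonal_neg]
  refine hL.posDef_add_of_mulVec_eq_zero (Matrix.posSemidef_diagonal_iff.mpr fun i => ?_)
    fun x hLx hDx => ?_
  · have := mul_nonpos_of_nonpos_of_nonneg (hR i) (mul_self_nonneg (r i ^ (α / 2)))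
    linarith
  · have hones : (fun _ => (1 : ℝ)) ≠ 0 := Function.ne_iff.mpr ⟨i₀, one_ne_zero⟩
    obtain ⟨c, rfl⟩ := Matrix.exists_smul_eq_of_mulVec_eq_zero hones hker
      (by rwa [Fintype.card_fin]) hLx
    have hc := congrFun hDx i₀
    simp only [Matrix.mulVec_diagonal, Pi.smul_apply, smul_eq_mul, mul_one, Pi.zero_apply] at hc
    have hs₀ : 0 < r i₀ ^ (α / 2) := Real.rpow_pos_of_pos (hr i₀) _
    have hd : -(r i₀ ^ (α / 2) * (α * R i₀) * r i₀ ^ (α / 2)) ≠ 0 :=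
      neg_ne_zero.mpr (mul_ne_zero (mul_ne_zero hs₀.ne' hi₀.ne) hs₀.ne')
    rw [(mul_eq_zero.mp hc).resolve_left hd, zero_smul]

/-- Let `L` be symmetric PSD of rank `N-1` with kernel spanned by
`(1,…,1)ᵀ`, `Σ = diag(r)` with `r > 0`, and `R̄ ∈ ℝ^N` with `αR̄ᵢ ≤ 0` for all
`i` and `αR̄ᵢ < 0` for some `i`. Then `L - Σ^{α/2} diag(αR̄) Σ^{α/2}` is
positive definite. -/
theorem stmt16 (N : ℕ) (hN : 0 < N) (α : ℝ)
    (L : Matrix (Fin N) (Fin N) ℝ) (hL : L.PosSemidef) (hrank : L.rank = N - 1)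
    (hker : L.mulVec (fun _ => 1) = 0)
    (r : Fin N → ℝ) (hr : ∀ i, 0 < r i)
    (R : Fin N → ℝ) (hR : ∀ i, α * R i ≤ 0) (hR' : ∃ i, α * R i < 0) :
    (L - Matrix.diagonal (fun i => r i ^ (α / 2)) *
        Matrix.diagonal (fun i => α * R i) *
        Matrix.diagonal (fun i => r i ^ (α / 2))).PosDef :=
  stmt16_general N α L hL hrank hker r hr R hR hR'
end
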